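/- Let k ≥ 1 and W a graphon, and let C₀, C₁, C₂, … and C^k_W be as in the iterative construction (C₀ the minimum μ^{⊗k}-relatively complete sub-σ-algebra whose L² subspace is invariant under all adjacency operators A^W_{ij}; C_{n+1} the intersection of all μ^{⊗k}-relatively complete D ⊇ C_n with N_j(L²(X^k, C_n, μ^{⊗k})) ⊆ L²(X^k, D, μ^{⊗k}) for all j; C^k_W the smallest μ^{⊗k}-relatively complete sub-σ-algebra containing ⋃_n C_n). Then every C_n (n ∈ ℕ) and C^k_W is permutation invariant: for every permutation π of {1,…,k}, the Koopman operator T_π maps the corresponding L² subspace into itself. -/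

import Mathlib

open MeasureTheory

noncomputable section

/-- A graphon: symmetric measurable `W : X × X → [0,1]`. -/
structure IsGraphon {X : Type*} [MeasurableSpace X] (W : X → X → ℝ) : Prop where
  measurable : Measurable (Function.uncurry W)
  symm : ∀ x y, W x y = W y x
  nonneg : ∀ x y, 0 ≤ W x y
  le_one : ∀ x y, W x y ≤ 1

/-- A sub-σ-algebra, wrapped in a structure (so that it does not interfere with
instance resolution). -/
structure SubSigma (α : Type*) where
  σ : MeasurableSpace α

/-- `m'` is a `μ`-relatively complete sub-σ-algebra of the ambient σ-algebra `mα`. -/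
def RelComplete {X : Type*} [mα : MeasurableSpace X]
    (μ : Measure X) (m' : SubSigma X) : Prop :=
  ∀ Z Z₀ : Set X, MeasurableSet[mα] Z → MeasurableSet[m'.σ] Z₀ →
    μ (symmDiff Z Z₀) = 0 → MeasurableSet[m'.σ] Z

/-- `L²(X^k, C, μ^{⊗k})` is invariant under every adjacency operator
`A^W_{ij} : f ↦ (x̄ ↦ W(x_i, x_j) · f(x̄))`, `i ≠ j`. -/
def AInvariant {X : Type*} [MeasurableSpace X] (μ : Measure X) (W : X → X → ℝ)
    {k : ℕ} (C : SubSigma (Fin k → X)) : Prop :=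
  ∀ i j : Fin k, i ≠ j → ∀ f : (Fin k → X) → ℝ,
    MemLp f 2 (Measure.pi fun _ : Fin k => μ) →
    AEStronglyMeasurable[C.σ] f (Measure.pi fun _ : Fin k => μ) →
    MemLp (fun x => W (x i) (x j) * f x) 2 (Measure.pi fun _ : Fin k => μ) ∧
      AEStronglyMeasurable[C.σ] (fun x => W (x i) (x j) * f x)
        (Measure.pi fun _ : Fin k => μ)

/-- The neighbor operators `N_j : f ↦ (x̄ ↦ ∫ f(x̄[y/j]) dμ(y))` map `L²(X^k, C, μ^{⊗k})`
into `L²(X^k, D, μ^{⊗k})`. -/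
def NMapsInto {X : Type*} [MeasurableSpace X] (μ : Measure X)
    {k : ℕ} (C D : SubSigma (Fin k → X)) : Prop :=
  ∀ (j : Fin k) (f : (Fin k → X) → ℝ),
    MemLp f 2 (Measure.pi fun _ : Fin k => μ) →
    AEStronglyMeasurable[C.σ] f (Measure.pi fun _ : Fin k => μ) →
    MemLp (fun x => ∫ y, f (Function.update x j y) ∂μ) 2
        (Measure.pi fun _ : Fin k => μ) ∧
      AEStronglyMeasurable[D.σ] (fun x => ∫ y, f (Function.update x j y) ∂μ)
        (Measure.pi fun _ : Fin k => μ)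

/-- The iterative construction: `C₀` is the smallest `μ^{⊗k}`-relatively complete
sub-σ-algebra whose `L²` subspace is invariant under all adjacency operators `A^W_{ij}`,
and `C_{n+1}` is the intersection of all `μ^{⊗k}`-relatively complete `D ⊇ C_n` with
`N_j(L²(C_n)) ⊆ L²(D)` for every `j`. -/
noncomputable def CSeq {X : Type*} [MeasurableSpace X] (μ : Measure X) (W : X → X → ℝ)
    (k : ℕ) : ℕ → MeasurableSpace (Fin k → X)
  | 0 => sInf {m | m ≤ (MeasurableSpace.pi : MeasurableSpace (Fin k → X)) ∧
      RelComplete (mα := (MeasurableSpace.pi : MeasurableSpace (Fin k → X))) (Measure.pi fun _ : Fin k => μ) ⟨m⟩ ∧ AInvariant μ W ⟨m⟩}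
  | (n + 1) => sInf {m | m ≤ (MeasurableSpace.pi : MeasurableSpace (Fin k → X)) ∧
      RelComplete (mα := (MeasurableSpace.pi : MeasurableSpace (Fin k → X))) (Measure.pi fun _ : Fin k => μ) ⟨m⟩ ∧ CSeq μ W k n ≤ m ∧
      NMapsInto μ ⟨CSeq μ W k n⟩ ⟨m⟩}

/-- `C^k_W`: the smallest `μ^{⊗k}`-relatively complete sub-σ-algebra containing all the
`C_n` of the iterative construction. -/
noncomputable def CLimit {X : Type*} [MeasurableSpace X] (μ : Measure X) (W : X → X → ℝ)
    (k : ℕ) : MeasurableSpace (Fin k → X) :=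
  sInf {m | m ≤ (MeasurableSpace.pi : MeasurableSpace (Fin k → X)) ∧
    RelComplete (mα := (MeasurableSpace.pi : MeasurableSpace (Fin k → X))) (Measure.pi fun _ : Fin k => μ) ⟨m⟩ ∧ ∀ n : ℕ, CSeq μ W k n ≤ m}

/-- A sub-σ-algebra `C` is permutation invariant if, for every permutation `π` of the
coordinates, the Koopman operator `T_π : f ↦ (x̄ ↦ f(x_{π(1)},…,x_{π(k)}))` maps
`L²(X^k, C, μ^{⊗k})` into itself. -/
def PermInvariantAlg {X : Type*} [MeasurableSpace X] (μ : Measure X)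
    {k : ℕ} (C : SubSigma (Fin k → X)) : Prop :=
  ∀ (π : Equiv.Perm (Fin k)) (f : (Fin k → X) → ℝ),
    MemLp f 2 (Measure.pi fun _ : Fin k => μ) →
    AEStronglyMeasurable[C.σ] f (Measure.pi fun _ : Fin k => μ) →
    MemLp (fun x => f (fun i => x (π i))) 2 (Measure.pi fun _ : Fin k => μ) ∧
      AEStronglyMeasurable[C.σ] (fun x => f (fun i => x (π i)))
        (Measure.pi fun _ : Fin k => μ)

/-!
Relabelling coordinates by a permutation `π` is a measure-preserving automorphism `P_π` of `X^k`
(with `T_π f = f ∘ P_π`), and it intertwines the adjacency operator `A_{ij}` with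
`A_{π⁻¹ i, π⁻¹ j}` and the neighbour operator `N_j` with `N_{π⁻¹ j}`. Hence pulling a
σ-algebra back along `P_π` preserves relative completeness, `A`-invariance and (when the source
σ-algebra is itself fixed by all `P_π`) the `N`-mapping property. So each family whose infimum
defines `C₀`, `C_{n+1}` (by induction on `n`) or `C^k_W` is stable under these pullbacks, and its
infimum is fixed by them; a σ-algebra fixed by every `P_π` is permutation invariant.
-/

open MeasureTheory

section Comap

variable {α β : Type*}

theorem Equiv.comap_comap_symm (e : α ≃ β) (m : MeasurableSpace β) :
    (m.comap e).comap e.symm = m := by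
  rw [MeasurableSpace.comap_comp, e.self_comp_symm, MeasurableSpace.comap_id]

theorem Equiv.comap_symm_comap (e : α ≃ β) (m : MeasurableSpace α) :
    (m.comap e.symm).comap e = m :=
  e.symm.comap_comap_symm m

theorem MeasurableSpace.comap_sInf_eq_of_forall_comap_mem (e : α ≃ α)
    {S : Set (MeasurableSpace α)} (hS : ∀ m ∈ S, m.comap e ∈ S)
    (hS_symm : ∀ m ∈ S, m.comap e.symm ∈ S) :
    (sInf S).comap e = sInf S := by
  have comap_sInf_le : ∀ e' : α ≃ α, (∀ m ∈ S, m.comap e'.symm ∈ S) →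
      (sInf S).comap e' ≤ sInf S := fun e' he' =>
    le_sInf fun m hm => by
      simpa only [e'.comap_symm_comap] using
        comap_mono (g := e') (sInf_le (he' m hm))
  refine (comap_sInf_le e hS_symm).antisymm ?_
  simpa only [e.comap_symm_comap] using
    comap_mono (g := e) (comap_sInf_le e.symm (by simpa only [e.symm_symm] using hS))

-- `m` is bound before the instances, so that these remain the ambient σ-algebras.
theorem MeasureTheory.AEStronglyMeasurable.comp_comap {E : Type*} [TopologicalSpace E]
    {m : MeasurableSpace β} [MeasurableSpace α] [MeasurableSpace β]
    {μ : Measure α} {ν : Measure β} {f : α → β}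
    (hf : Measure.QuasiMeasurePreserving f μ ν) {g : β → E}
    (hg : AEStronglyMeasurable[m] g ν) : AEStronglyMeasurable[m.comap f] (g ∘ f) μ := by
  obtain ⟨g', hg'_meas, hg_ae⟩ := hg
  exact ⟨g' ∘ f, hg'_meas.comp_measurable (comap_measurable f), hf.ae_eq_comp hg_ae⟩

theorem RelComplete.comap {m : MeasurableSpace β} [MeasurableSpace α] [MeasurableSpace β]
    {μ : Measure α} {ν : Measure β} (h : RelComplete ν ⟨m⟩) (e : α ≃ᵐ β)
    (he : Measure.QuasiMeasurePreserving e.symm ν μ) :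
    RelComplete μ ⟨m.comap e⟩ := by
  rintro Z _ hZ ⟨t, ht, rfl⟩ hnull
  refine ⟨e.symm ⁻¹' Z, h _ t (e.symm.measurable hZ) ht ?_, by ext; simp⟩
  have : e.symm ⁻¹' (e ⁻¹' t) = t := by ext; simp
  rw [← this, ← Set.preimage_symmDiff]
  exact he.preimage_null hnull

end Comap

section PermCoords

variable {ι X : Type*} [MeasurableSpace X]

/-- The relabelling `x ↦ (i ↦ x (π i))` of coordinates; `T_π f = f ∘ permCoords π`. -/
def permCoords (π : Equiv.Perm ι) : (ι → X) ≃ᵐ (ι → X) :=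
  MeasurableEquiv.arrowCongr' π.symm (MeasurableEquiv.refl X)

@[simp]
theorem permCoords_apply (π : Equiv.Perm ι) (x : ι → X) (i : ι) :
    permCoords π x i = x (π i) := rfl

theorem permCoords_symm (π : Equiv.Perm ι) :
    (permCoords π).symm = permCoords (X := X) π.symm := rfl

theorem permCoords_update [DecidableEq ι] (π : Equiv.Perm ι) (x : ι → X) (j : ι) (y : X) :
    permCoords π (Function.update x j y) = Function.update (permCoords π x) (π.symm j) y :=
  Function.update_comp_equiv x π j y

theorem comap_permCoords_comap_permCoords_symm (C : SubSigma (ι → X)) (π : Equiv.Perm ι) :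
    (C.σ.comap (permCoords π)).comap (permCoords π.symm) = C.σ :=
  (permCoords π).toEquiv.comap_comap_symm C.σ

variable [Fintype ι]

theorem measurePreserving_permCoords (μ : Measure X) [SigmaFinite μ] (π : Equiv.Perm ι) :
    MeasurePreserving (permCoords π) (Measure.pi fun _ : ι => μ) (Measure.pi fun _ => μ) :=
  measurePreserving_arrowCongr' _ _ π.symm _ fun _ => MeasurePreserving.id μ

variable {μ : Measure X} [SigmaFinite μ]

theorem memLp_and_aestronglyMeasurable_comp_permCoords {E : Type*} [NormedAddCommGroup E]
    {p : ENNReal} {C : SubSigma (ι → X)} {f : (ι → X) → E} (π : Equiv.Perm ι)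
    (hf : MemLp f p (Measure.pi fun _ => μ) ∧
      AEStronglyMeasurable[C.σ] f (Measure.pi fun _ => μ)) :
    MemLp (f ∘ permCoords π) p (Measure.pi fun _ => μ) ∧
      AEStronglyMeasurable[C.σ.comap (permCoords π)] (f ∘ permCoords π)
        (Measure.pi fun _ => μ) :=
  ⟨hf.1.comp_measurePreserving (measurePreserving_permCoords μ π),
    hf.2.comp_comap (measurePreserving_permCoords μ π).quasiMeasurePreserving⟩

theorem RelComplete.comap_permCoords {C : SubSigma (ι → X)} (hle : C.σ ≤ MeasurableSpace.pi)
    (hrc : RelComplete (Measure.pi fun _ : ι => μ) C) (π : Equiv.Perm ι) :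
    C.σ.comap (permCoords π) ≤ MeasurableSpace.pi ∧
      RelComplete (Measure.pi fun _ : ι => μ) ⟨C.σ.comap (permCoords π)⟩ :=
  ⟨(MeasurableSpace.comap_mono hle).trans (permCoords π).measurable.comap_le,
    hrc.comap _ (measurePreserving_permCoords μ π).symm.quasiMeasurePreserving⟩

theorem comap_permCoords_relCompleteInf_eq {Q : MeasurableSpace (ι → X) → Prop}
    (hQ : ∀ π m, Q m → Q (m.comap (permCoords π))) (π : Equiv.Perm ι) :
    (sInf {m | m ≤ MeasurableSpace.pi ∧
      RelComplete (mα := MeasurableSpace.pi) (Measure.pi fun _ : ι => μ) ⟨m⟩ ∧ Q m}).comap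
        (permCoords π) =
      sInf {m | m ≤ MeasurableSpace.pi ∧
        RelComplete (mα := MeasurableSpace.pi) (Measure.pi fun _ : ι => μ) ⟨m⟩ ∧ Q m} := by
  refine MeasurableSpace.comap_sInf_eq_of_forall_comap_mem (permCoords π).toEquiv ?_
    (show ∀ m ∈ _, MeasurableSpace.comap (permCoords π.symm) m ∈ _ from ?_) <;>
  · rintro m ⟨hle, hrc, hq⟩
    exact (RelComplete.comap_permCoords (C := ⟨m⟩) hle hrc _).imp_right (⟨·, hQ _ m hq⟩)

end PermCoords

section Graphon

variable {X : Type*} [MeasurableSpace X] {μ : Measure X} [SigmaFinite μ] {k : ℕ}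

theorem AInvariant.comap_permCoords {W : X → X → ℝ} {C : SubSigma (Fin k → X)}
    (h : AInvariant μ W C) (π : Equiv.Perm (Fin k)) :
    AInvariant μ W ⟨C.σ.comap (permCoords π)⟩ := by
  intro i j hij f hf hfm
  obtain ⟨hg, hgm⟩ := memLp_and_aestronglyMeasurable_comp_permCoords π.symm ⟨hf, hfm⟩
  rw [comap_permCoords_comap_permCoords_symm] at hgm
  have key : (fun x => W (x i) (x j) * f x) = (fun x => W (x (π.symm i)) (x (π.symm j)) *
      (f ∘ permCoords π.symm) x) ∘ permCoords π := by
    ext x; simp [← permCoords_symm]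
  rw [key]
  exact memLp_and_aestronglyMeasurable_comp_permCoords π
    (h _ _ (π.symm.injective.ne hij) _ hg hgm)

theorem NMapsInto.comap_permCoords {C D : SubSigma (Fin k → X)}
    (hC : ∀ π, C.σ.comap (permCoords π) = C.σ) (h : NMapsInto μ C D) (π : Equiv.Perm (Fin k)) :
    NMapsInto μ C ⟨D.σ.comap (permCoords π)⟩ := by
  intro j f hf hfm
  obtain ⟨hg, hgm⟩ := memLp_and_aestronglyMeasurable_comp_permCoords π.symm ⟨hf, hfm⟩
  rw [hC] at hgm
  have key : (fun x => ∫ y, f (Function.update x j y) ∂μ) =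
      (fun x => ∫ y, (f ∘ permCoords π.symm) (Function.update x (π.symm j) y) ∂μ) ∘
        permCoords π := by
    ext x; simp [← permCoords_update, ← permCoords_symm]
  rw [key]
  exact memLp_and_aestronglyMeasurable_comp_permCoords π (h _ _ hg hgm)

theorem comap_permCoords_CSeq (W : X → X → ℝ) (n : ℕ) (π : Equiv.Perm (Fin k)) :
    (CSeq μ W k n).comap (permCoords π) = CSeq μ W k n := by
  induction n generalizing π with
  | zero => exact comap_permCoords_relCompleteInf_eq (fun ρ _ hA => hA.comap_permCoords ρ) π
  | succ n ih =>
    exact comap_permCoords_relCompleteInf_eq (fun ρ _ ⟨hle, hN⟩ =>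
      ⟨(ih ρ).symm.trans_le (MeasurableSpace.comap_mono hle), hN.comap_permCoords ih ρ⟩) π

theorem comap_permCoords_CLimit (W : X → X → ℝ) (π : Equiv.Perm (Fin k)) :
    (CLimit μ W k).comap (permCoords π) = CLimit μ W k :=
  comap_permCoords_relCompleteInf_eq (fun ρ _ hle n =>
    (comap_permCoords_CSeq W n ρ).symm.trans_le (MeasurableSpace.comap_mono (hle n))) π

theorem permInvariantAlg_of_forall_comap_eq {C : SubSigma (Fin k → X)}
    (hC : ∀ π, C.σ.comap (permCoords π) = C.σ) : PermInvariantAlg μ C := by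
  intro π f hf hfm
  have := memLp_and_aestronglyMeasurable_comp_permCoords π ⟨hf, hfm⟩
  rwa [hC] at this

end Graphon

theorem stmt12_general {X : Type*} [MeasurableSpace X] (μ : Measure X) [IsProbabilityMeasure μ]
    {k : ℕ} (W : X → X → ℝ) :
    (∀ n : ℕ, PermInvariantAlg μ ⟨CSeq μ W k n⟩) ∧
      PermInvariantAlg μ ⟨CLimit μ W k⟩ :=
  ⟨fun n => permInvariantAlg_of_forall_comap_eq (comap_permCoords_CSeq W n),
    permInvariantAlg_of_forall_comap_eq (comap_permCoords_CLimit W)⟩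

/-- Every σ-algebra `C_n` of the iterative construction, as well as the
limit `C^k_W`, is permutation invariant. -/
theorem stmt12 {X : Type*} [MeasurableSpace X] (μ : Measure X) [IsProbabilityMeasure μ]
    {k : ℕ} (hk : 1 ≤ k) (W : X → X → ℝ) (hW : IsGraphon W) :
    (∀ n : ℕ, PermInvariantAlg μ ⟨CSeq μ W k n⟩) ∧
      PermInvariantAlg μ ⟨CLimit μ W k⟩ :=
  stmt12_general μ W
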